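/- Let c(n,m) be the number of increasing 1,2-trees on {1,…,n} with m edges, and let C be the formal power series in the variable z, with coefficients in the ring ℚ[[u]] of formal power series in u, whose coefficient of z^n is (1/n!)·Σ_m c(n,m)·u^m (a polynomial in u, since c(n,m) = 0 for m > 2n−3). Then the constant term of C (its coefficient of z^0) is 0, and C satisfies the partial differential equation dC/dz = 1 + z·u·(dC/dz) + u³·C_u, where dC/dz denotes the formal derivative of C with respect to z, C_u denotes the series obtained from C by differentiating each z-coefficient with respect to u, 1 denotes the constant series, and u denotes the series with constant z-coefficient u. -/

import Mathlib

open SimpleGraph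

/-- The set of neighbors of `v` having a smaller label. -/
def lowerNbrs {n : ℕ} (G : SimpleGraph (Fin n)) (v : Fin n) : Set (Fin n) :=
  {x | G.Adj v x ∧ x < v}

/-- `G` is an increasing 1,2-tree: every vertex other than the first one has a nonempty
set of smaller neighbors, of cardinality at most 2, forming a clique. -/
def IsIncreasing12Tree {n : ℕ} (G : SimpleGraph (Fin n)) : Prop :=
  ∀ v : Fin n, 1 ≤ v.val →
    (lowerNbrs G v).Nonempty ∧ (lowerNbrs G v).ncard ≤ 2 ∧
      ∀ x ∈ lowerNbrs G v, ∀ y ∈ lowerNbrs G v, x ≠ y → G.Adj x y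

/-- The set of vertices reachable from `v` after deleting the edge `{u,v}`
(in a tree, the vertex set of the subtree rooted at `v` when `v` is the child endpoint). -/
def subtreeSet {n : ℕ} (G : SimpleGraph (Fin n)) (u v : Fin n) : Set (Fin n) :=
  {w | (G.deleteEdges {s(u, v)}).Reachable v w}

/-- `v` is the child endpoint of the edge `{u,v}`: after deleting this edge,
`v` is no longer reachable from the root. -/
def IsChild {n : ℕ} (G : SimpleGraph (Fin n)) (root u v : Fin n) : Prop :=
  G.Adj u v ∧ ¬ (G.deleteEdges {s(u, v)}).Reachable root v

/-- The minimal label occurring in a set of vertices (labels being `Fin.val`). -/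
noncomputable def minLabel {n : ℕ} (S : Set (Fin n)) : ℕ := sInf (Fin.val '' S)

/-- An edge `{u,v}` with child endpoint `v` is a twist if the minimal label in the
subtree rooted at `v` is smaller than the label of `u`. -/
def IsTwist {n : ℕ} (G : SimpleGraph (Fin n)) (root : Fin n) (e : Sym2 (Fin n)) : Prop :=
  ∃ u v : Fin n, e = s(u, v) ∧ IsChild G root u v ∧ minLabel (subtreeSet G u v) < u.val

/-- An edge `{u,v}` with child endpoint `v` is increasing if the label of `u` is smaller
than every label in the subtree rooted at `v`. -/
def IsIncreasingEdge {n : ℕ} (G : SimpleGraph (Fin n)) (root : Fin n) (e : Sym2 (Fin n)) : Prop :=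
  ∃ u v : Fin n, e = s(u, v) ∧ IsChild G root u v ∧ u.val < minLabel (subtreeSet G u v)

/-- The number of twists of `G` (with respect to the given root). -/
noncomputable def numTwists {n : ℕ} (G : SimpleGraph (Fin n)) (root : Fin n) : ℕ :=
  Nat.card {e : Sym2 (Fin n) // e ∈ G.edgeSet ∧ IsTwist G root e}

/-- The number of increasing 1,2-trees on `n` vertices with `m` edges. -/
noncomputable def numInc12Trees (n m : ℕ) : ℕ :=
  Nat.card {G : SimpleGraph (Fin n) // IsIncreasing12Tree G ∧ G.edgeSet.ncard = m}

/-- The number of Cayley trees on `n ≥ 1` vertices (rooted at the vertex with label 1)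
with exactly `j` twists. -/
noncomputable def numCayleyTwist (n j : ℕ) (h : 0 < n) : ℕ :=
  Nat.card {G : SimpleGraph (Fin n) // G.IsTree ∧ numTwists G ⟨0, h⟩ = j}

open PowerSeries

/-- Formal derivative of a power series (with respect to its own variable). -/
noncomputable def derivSeries {R : Type*} [CommSemiring R] (f : PowerSeries R) :
    PowerSeries R :=
  PowerSeries.mk fun k => ((k + 1 : ℕ) : R) * PowerSeries.coeff (R := R) (k + 1) f

/-- Derivative of a series in `z` with coefficients in `ℚ[[u]]`, with respect to `u`
(i.e. coefficientwise in `z`). -/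
noncomputable def derivU (f : PowerSeries (PowerSeries ℚ)) : PowerSeries (PowerSeries ℚ) :=
  PowerSeries.mk fun k => derivSeries (PowerSeries.coeff (R := PowerSeries ℚ) k f)


/-!
Deleting the vertex `n + 1` from an increasing 1,2-tree on `n + 1 ≥ 2` vertices leaves an
increasing 1,2-tree `H` on `n` vertices, and the deleted vertex was attached either to one vertex
of `H` (`n` choices, one new edge) or to both ends of an edge of `H` (`m` choices if `H` has `m`
edges, two new edges). For the edge polynomials `Tₙ(u) = ∑ₘ c(n, m) uᵐ` this gives
`Tₙ₊₁ = n u Tₙ + u³ Tₙ'` and `T₁ = 1`, which is the PDE read off coefficientwise in `z`,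
since `C = ∑ₙ Tₙ zⁿ / n!`.
-/

open Finset

namespace SimpleGraph

variable {V : Type*}

theorem card_cliqueFinset_one [Fintype V] [DecidableEq V] (G : SimpleGraph V)
    [DecidableRel G.Adj] : #(G.cliqueFinset 1) = Fintype.card V := by
  have : G.cliqueFinset 1 = univ.map ⟨singleton, singleton_injective⟩ := by
    ext s
    simp [isNClique_one, eq_comm]
  rw [this, card_map, card_univ]

theorem card_cliqueFinset_two [Fintype V] [DecidableEq V] (G : SimpleGraph V)
    [DecidableRel G.Adj] : #(G.cliqueFinset 2) = #G.edgeFinset := by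
  symm
  refine card_nbij Sym2.toFinset ?_ ?_ ?_
  · intro e he
    induction e using Sym2.ind with
    | _ x y =>
      rw [mem_coe, mem_edgeFinset, mem_edgeSet] at he
      rw [Sym2.toFinset_mk_eq, mem_coe, mem_cliqueFinset_iff, isNClique_iff, coe_pair,
        isClique_pair]
      exact ⟨fun _ => he, card_pair he.ne⟩
  · intro e _ e' _ h
    induction e using Sym2.ind with | _ x y => ?_
    induction e' using Sym2.ind with | _ x' y' => ?_
    simp only [Sym2.toFinset_mk_eq] at h
    exact Sym2.ext fun z => by simpa using Finset.ext_iff.1 h z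
  · intro s hs
    rw [coe_cliqueFinset, mem_cliqueSet_iff, isNClique_iff, card_eq_two] at hs
    obtain ⟨hclique, x, y, hxy, rfl⟩ := hs
    refine ⟨s(x, y), ?_, Sym2.toFinset_mk_eq⟩
    rw [mem_coe, mem_edgeFinset, mem_edgeSet]
    exact isClique_pair.1 (by simpa using hclique) hxy

def IsSmallClique (G : SimpleGraph V) (S : Set V) : Prop :=
  S.Nonempty ∧ S.ncard ≤ 2 ∧ G.IsClique S

theorem isSmallClique_image_iff {W : Type*} {G : SimpleGraph W} {f : V → W}
    (hf : Function.Injective f) {S : Set V} :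
    G.IsSmallClique (f '' S) ↔ (G.comap f).IsSmallClique S := by
  simp only [IsSmallClique, Set.image_nonempty, Set.ncard_image_of_injective S hf, IsClique,
    hf.injOn.pairwise_image]
  rfl

theorem isSmallClique_coe_iff [Fintype V] [DecidableEq V] {G : SimpleGraph V}
    [DecidableRel G.Adj] {D : Finset V} :
    G.IsSmallClique D ↔ D ∈ G.cliqueFinset 1 ∪ G.cliqueFinset 2 := by
  simp only [IsSmallClique, coe_nonempty, Set.ncard_coe_finset, mem_union, mem_cliqueFinset_iff,
    isNClique_iff]
  constructor
  · rintro ⟨hne, hcard, hclique⟩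
    have := card_pos.2 hne
    obtain h | h : #D = 1 ∨ #D = 2 := by omega
    exacts [Or.inl ⟨hclique, h⟩, Or.inr ⟨hclique, h⟩]
  · rintro (⟨hclique, hcard⟩ | ⟨hclique, hcard⟩) <;>
      exact ⟨card_pos.1 (by omega), by omega, hclique⟩

variable {n : ℕ}

/-- The graph on `Fin (n + 1)` inducing `H` on `Fin n`, in which `Fin.last n` has neighbourhood
`D`. -/
def extendLast (H : SimpleGraph (Fin n)) (D : Finset (Fin n)) : SimpleGraph (Fin (n + 1)) where
  Adj a b := Fin.lastCases (motive := fun _ => Prop)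
    (Fin.lastCases (motive := fun _ => Prop) False (· ∈ D) b)
    (fun a' => Fin.lastCases (motive := fun _ => Prop) (a' ∈ D) (H.Adj a') b) a
  symm := ⟨fun a b => by
    cases a using Fin.lastCases <;> cases b using Fin.lastCases <;> simp [adj_comm]⟩
  loopless := ⟨fun a => by cases a using Fin.lastCases <;> simp⟩

variable {H : SimpleGraph (Fin n)} {D : Finset (Fin n)} {a b : Fin n}

@[simp] theorem extendLast_adj_castSucc :
    (extendLast H D).Adj a.castSucc b.castSucc ↔ H.Adj a b := by
  simp [extendLast]

@[simp] theorem extendLast_adj_last_castSucc :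
    (extendLast H D).Adj (Fin.last n) a.castSucc ↔ a ∈ D := by
  simp [extendLast]

@[simp] theorem extendLast_adj_castSucc_last :
    (extendLast H D).Adj a.castSucc (Fin.last n) ↔ a ∈ D := by
  simp [extendLast]

theorem comap_castSucc_extendLast : (extendLast H D).comap Fin.castSucc = H := by
  ext; simp

open Classical in
noncomputable def splitLast :
    SimpleGraph (Fin (n + 1)) ≃ SimpleGraph (Fin n) × Finset (Fin n) where
  toFun G := (G.comap Fin.castSucc, ({w | G.Adj (Fin.last n) w.castSucc} : Finset (Fin n)))
  invFun p := extendLast p.1 p.2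
  left_inv G := by
    ext a b
    cases a using Fin.lastCases <;> cases b using Fin.lastCases <;> simp [adj_comm]
  right_inv p := by
    ext <;> simp

theorem last_notMem_map_castSucc (z : Sym2 (Fin n)) : Fin.last n ∉ z.map Fin.castSucc := by
  simp [Sym2.mem_map, Fin.castSucc_ne_last]

theorem edgeSet_extendLast : (extendLast H D).edgeSet =
    Sym2.map Fin.castSucc '' H.edgeSet ∪ (fun w : Fin n => s(w.castSucc, Fin.last n)) '' D := by
  have hcast : Function.Injective (Sym2.map (Fin.castSucc (n := n))) :=
    Sym2.map.injective (Fin.castSucc_injective n)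
  have hmap (z : Sym2 (Fin n)) (c : Fin (n + 1)) :
      z.map Fin.castSucc ≠ s(c, Fin.last n) ∧ z.map Fin.castSucc ≠ s(Fin.last n, c) :=
    ⟨fun h => last_notMem_map_castSucc z (h ▸ Sym2.mem_mk_right _ _),
      fun h => last_notMem_map_castSucc z (h ▸ Sym2.mem_mk_left _ _)⟩
  ext e
  induction e using Sym2.ind with
  | _ a b =>
    cases a using Fin.lastCases <;> cases b using Fin.lastCases
    · simp [hmap]
    · simp [hmap]
    · simp [hmap]
    · rw [← Sym2.map_mk, Set.mem_union, hcast.mem_set_image]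
      simp [(Fin.castSucc_ne_last _).symm]

theorem ncard_edgeSet_extendLast :
    (extendLast H D).edgeSet.ncard = H.edgeSet.ncard + #D := by
  rw [edgeSet_extendLast, Set.ncard_union_eq, Set.ncard_image_of_injective _
    (Sym2.map.injective (Fin.castSucc_injective n)), Set.ncard_image_of_injective,
    Set.ncard_coe_finset]
  · intro x y h
    simpa using h
  · rw [Set.disjoint_left]
    rintro _ ⟨e, -, rfl⟩ ⟨w, -, hw⟩
    exact last_notMem_map_castSucc e (hw ▸ Sym2.mem_mk_right _ _)

end SimpleGraph

section Increasing12Tree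

variable {n : ℕ} {H : SimpleGraph (Fin n)} {D : Finset (Fin n)}

theorem isIncreasing12Tree_iff (G : SimpleGraph (Fin n)) :
    IsIncreasing12Tree G ↔ ∀ v : Fin n, 1 ≤ v.val → G.IsSmallClique (lowerNbrs G v) :=
  Iff.rfl

theorem lowerNbrs_extendLast_castSucc (v : Fin n) :
    lowerNbrs (extendLast H D) v.castSucc = Fin.castSucc '' lowerNbrs H v := by
  ext x
  cases x using Fin.lastCases <;> simp [lowerNbrs, (Fin.castSucc_lt_last _).le]

theorem lowerNbrs_extendLast_last :
    lowerNbrs (extendLast H D) (Fin.last n) = Fin.castSucc '' D := by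
  ext x
  cases x using Fin.lastCases <;> simp [lowerNbrs]

theorem isIncreasing12Tree_extendLast [DecidableRel H.Adj] (hn : 1 ≤ n) :
    IsIncreasing12Tree (extendLast H D) ↔
      IsIncreasing12Tree H ∧ D ∈ H.cliqueFinset 1 ∪ H.cliqueFinset 2 := by
  rw [isIncreasing12Tree_iff, Fin.forall_fin_succ', lowerNbrs_extendLast_last,
    isSmallClique_image_iff (Fin.castSucc_injective n), comap_castSucc_extendLast,
    isSmallClique_coe_iff]
  simp only [Fin.val_castSucc, Fin.val_last, lowerNbrs_extendLast_castSucc,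
    isSmallClique_image_iff (Fin.castSucc_injective n), comap_castSucc_extendLast, hn,
    forall_const, isIncreasing12Tree_iff]

end Increasing12Tree

theorem derivSeries_eq_derivative {R : Type*} [CommSemiring R] (f : R⟦X⟧) :
    derivSeries f = d⁄dX R f := by
  ext k
  rw [derivSeries, coeff_mk, coeff_derivative, mul_comm]
  push_cast
  rfl

theorem coeff_derivU (f : ℚ⟦X⟧⟦X⟧) (k : ℕ) : coeff k (derivU f) = d⁄dX ℚ (coeff k f) := by
  rw [derivU, coeff_mk, derivSeries_eq_derivative]

section EdgeSeries

variable (R : Type*) [CommSemiring R] {n : ℕ}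

theorem X_mul_derivative_X_pow (e : ℕ) : X * d⁄dX R (X ^ e) = (e : R⟦X⟧) * X ^ e := by
  rw [derivative_pow, derivative_X]
  cases e with
  | zero => simp
  | succ e => simp only [Nat.add_sub_cancel, pow_succ]; ring

noncomputable def inc12EdgeSeries (n : ℕ) : R⟦X⟧ :=
  PowerSeries.mk fun m => (numInc12Trees n m : R)

open Classical in
theorem inc12EdgeSeries_eq_sum (n : ℕ) : inc12EdgeSeries R n =
    ∑ G : SimpleGraph (Fin n), if IsIncreasing12Tree G then X ^ G.edgeSet.ncard else 0 := by
  ext m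
  simp only [inc12EdgeSeries, coeff_mk, map_sum, apply_ite (coeff m), coeff_X_pow, map_zero,
    ← ite_and, sum_boole, numInc12Trees, Nat.card_eq_fintype_card, Fintype.card_subtype,
    eq_comm (a := m)]

theorem inc12EdgeSeries_one : inc12EdgeSeries R 1 = 1 := by
  classical
  have : Subsingleton (SimpleGraph (Fin 1)) :=
    ⟨fun G G' => by ext a b; simp [Subsingleton.elim a b]⟩
  have hbot : IsIncreasing12Tree (⊥ : SimpleGraph (Fin 1)) := fun v hv => by omega
  rw [inc12EdgeSeries_eq_sum, Fintype.sum_subsingleton _ ⊥, if_pos hbot]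
  simp

open Classical in
theorem sum_extendLast (hn : 1 ≤ n) (H : SimpleGraph (Fin n)) :
    ∑ D : Finset (Fin n), (if IsIncreasing12Tree (extendLast H D)
        then (X : R⟦X⟧) ^ (extendLast H D).edgeSet.ncard else 0) =
      if IsIncreasing12Tree H
      then X ^ H.edgeSet.ncard * ((n : R⟦X⟧) * X + (H.edgeSet.ncard : R⟦X⟧) * X ^ 2)
      else 0 := by
  simp only [isIncreasing12Tree_extendLast hn, ncard_edgeSet_extendLast, pow_add, ite_and]
  split_ifs with hH
  · have hdisj : Disjoint (H.cliqueFinset 1) (H.cliqueFinset 2) := by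
      rw [Finset.disjoint_left]
      intro D h1 h2
      rw [mem_cliqueFinset_iff, isNClique_iff] at h1 h2
      omega
    have hsum (k : ℕ) :
        ∑ D ∈ H.cliqueFinset k, (X : R⟦X⟧) ^ #D = #(H.cliqueFinset k) • X ^ k := by
      rw [← sum_const]
      exact sum_congr rfl fun D hD => by rw [(mem_cliqueFinset_iff.1 hD).card_eq]
    rw [← sum_filter, filter_mem_eq_inter, univ_inter, ← mul_sum, sum_union hdisj, hsum, hsum,
      card_cliqueFinset_one, card_cliqueFinset_two, Fintype.card_fin, ← coe_edgeFinset,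
      Set.ncard_coe_finset, nsmul_eq_mul, nsmul_eq_mul, pow_one]
  · simp

theorem inc12EdgeSeries_succ (hn : 1 ≤ n) :
    inc12EdgeSeries R (n + 1) =
      (n : R⟦X⟧) * X * inc12EdgeSeries R n + X ^ 3 * d⁄dX R (inc12EdgeSeries R n) := by
  classical
  rw [inc12EdgeSeries_eq_sum, ← Fintype.sum_equiv splitLast.symm (fun p =>
    if IsIncreasing12Tree (extendLast p.1 p.2) then X ^ (extendLast p.1 p.2).edgeSet.ncard else 0)
    _ fun _ => rfl, Fintype.sum_prod_type, inc12EdgeSeries_eq_sum, map_sum, mul_sum, mul_sum,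
    ← sum_add_distrib]
  refine sum_congr rfl fun H _ => ?_
  rw [sum_extendLast R hn]
  split_ifs
  · rw [show (X : R⟦X⟧) ^ 3 * d⁄dX R (X ^ H.edgeSet.ncard) =
        X ^ 2 * (X * d⁄dX R (X ^ H.edgeSet.ncard)) by ring, X_mul_derivative_X_pow]
    ring
  · simp

end EdgeSeries

/-- The bivariate exponential generating function `C(z,u)` of increasing 1,2-trees, counted
by vertices (`z`) and edges (`u`), satisfies the PDE `∂C/∂z = 1 + z·u·∂C/∂z + u³·∂C/∂u`. -/
theorem egf_increasing12Trees_pde (C : PowerSeries (PowerSeries ℚ))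
    (hC0 : PowerSeries.coeff (R := PowerSeries ℚ) 0 C = 0)
    (hC : ∀ n : ℕ, 1 ≤ n → PowerSeries.coeff (R := PowerSeries ℚ) n C =
      PowerSeries.mk fun m => (numInc12Trees n m : ℚ) / (n.factorial : ℚ)) :
    derivSeries C =
      1 + (PowerSeries.X * PowerSeries.C (R := PowerSeries ℚ) PowerSeries.X) * derivSeries C
        + (PowerSeries.C (R := PowerSeries ℚ) PowerSeries.X) ^ 3 * derivU C := by
  have hCn (n : ℕ) (hn : 1 ≤ n) :
      coeff n C = PowerSeries.C (n.factorial : ℚ)⁻¹ * inc12EdgeSeries ℚ n := by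
    ext m
    rw [hC n hn, coeff_mk, coeff_C_mul, inc12EdgeSeries, coeff_mk, inv_mul_eq_div]
  simp only [derivSeries_eq_derivative]
  ext1 k
  rw [map_add, map_add, coeff_derivative, mul_assoc, ← map_pow, coeff_C_mul, coeff_derivU]
  rcases k with _ | k
  · simp [hC0, hCn 1 le_rfl, inc12EdgeSeries_one]
  · rw [coeff_succ_X_mul, coeff_C_mul, coeff_derivative, coeff_one, if_neg k.succ_ne_zero,
      hCn (k + 1) (by omega), hCn (k + 2) (by omega), inc12EdgeSeries_succ ℚ (by omega),
      Derivation.leibniz]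
    have hfac : PowerSeries.C ((k + 2).factorial : ℚ)⁻¹ * ((k + 1 : ℕ) + 1 : ℚ⟦X⟧) =
        PowerSeries.C ((k + 1).factorial : ℚ)⁻¹ := by
      rw [← map_natCast PowerSeries.C, ← map_one PowerSeries.C, ← map_add, ← map_mul,
        Nat.factorial_succ (k + 1)]
      congr 1
      push_cast
      field_simp
    simp only [smul_eq_mul, derivative_C, mul_zero, add_zero, zero_add]
    push_cast at hfac ⊢
    linear_combination (((k : ℚ⟦X⟧) + 1) * X * inc12EdgeSeries ℚ (k + 1) +
      X ^ 3 * d⁄dX ℚ (inc12EdgeSeries ℚ (k + 1))) * hfac
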